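/- (Lower bound of the true gradient norm by the smoothed gradient norm.) Let d : ℕ, L ≥ 0 and μ ≥ 0, and let f : EuclideanSpace ℝ (Fin d) → ℝ have L-Lipschitz gradient. Then for every x, (1/2)·‖∇f(x)‖² − (μ²·L²/4)·(d+3)³ ≤ ‖∫ ∇f(x + μ • u) ∂γ_d(u)‖². -/

import Mathlib

open MeasureTheory RealInnerProductSpace

/-- The standard Gaussian measure on `EuclideanSpace ℝ (Fin d)`, i.e. the product of `d`
copies of the real standard Gaussian measure. -/
noncomputable def stdGaussian (d : ℕ) : Measure (EuclideanSpace ℝ (Fin d)) :=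
  Measure.map (MeasurableEquiv.toLp 2 (Fin d → ℝ))
    (Measure.pi (fun _ : Fin d => ProbabilityTheory.gaussianReal 0 1))

/-!
Write `a = ∇f(x)` and `b = 𝔼 ∇f(x + μu)`. Then `‖a‖² ≤ 2‖b‖² + 2‖a - b‖²`, and `a - b` is the
average of `∇f(x) - ∇f(x + μu)`, so the Lipschitz bound gives `‖a - b‖ ≤ L |μ| 𝔼‖u‖`. By Jensen,
`(𝔼‖u‖)² ≤ 𝔼‖u‖² = d` (each coordinate of `u` has variance one), hence `‖a - b‖² ≤ L²μ²d`, and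
`d ≤ (d + 3)³ / 4` finishes the estimate.
-/

theorem stdGaussian_eq_stdGaussian_euclideanSpace (d : ℕ) :
    stdGaussian d = ProbabilityTheory.stdGaussian (EuclideanSpace ℝ (Fin d)) :=
  ProbabilityTheory.map_pi_eq_stdGaussian

theorem sq_integral_le_integral_sq {Ω : Type*} [MeasurableSpace Ω] {μ : Measure Ω}
    [IsProbabilityMeasure μ] {X : Ω → ℝ} (hX : MemLp X 2 μ) :
    (∫ ω, X ω ∂μ) ^ 2 ≤ ∫ ω, X ω ^ 2 ∂μ := by
  have := ProbabilityTheory.variance_nonneg X μ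
  rw [ProbabilityTheory.variance_eq_sub hX] at this
  simpa using this

theorem norm_sub_integral_comp_add_smul_le {E F : Type*} [NormedAddCommGroup E]
    [NormedSpace ℝ E] [MeasurableSpace E] [OpensMeasurableSpace E] [SecondCountableTopology E]
    [NormedAddCommGroup F] [NormedSpace ℝ F] [CompleteSpace F] {ν : Measure E}
    [IsProbabilityMeasure ν] {g : E → F} {L : ℝ} (hg : ∀ x y, ‖g x - g y‖ ≤ L * ‖x - y‖)
    (hν : Integrable (fun u ↦ ‖u‖) ν) (x : E) (μ : ℝ) :
    ‖g x - ∫ u, g (x + μ • u) ∂ν‖ ≤ L * |μ| * ∫ u, ‖u‖ ∂ν := by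
  have hcont : Continuous g :=
    (LipschitzWith.of_dist_le' (K := L) (by simpa only [dist_eq_norm] using hg)).continuous
  have hbound (u : E) : ‖g x - g (x + μ • u)‖ ≤ L * |μ| * ‖u‖ := by
    simpa [norm_smul, mul_assoc] using hg x (x + μ • u)
  have hdev : Integrable (fun u ↦ g x - g (x + μ • u)) ν :=
    (hν.const_mul _).mono' (by fun_prop) (ae_of_all _ hbound)
  have hshift : Integrable (fun u ↦ g (x + μ • u)) ν :=
    ((integrable_const (g x)).sub hdev).congr (ae_of_all _ fun _ ↦ sub_sub_cancel _ _)
  calc ‖g x - ∫ u, g (x + μ • u) ∂ν‖ = ‖∫ u, (g x - g (x + μ • u)) ∂ν‖ := by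
        rw [integral_sub (integrable_const _) hshift, integral_const, probReal_univ, one_smul]
    _ ≤ ∫ u, ‖g x - g (x + μ • u)‖ ∂ν := norm_integral_le_integral_norm _
    _ ≤ ∫ u, L * |μ| * ‖u‖ ∂ν :=
        integral_mono_of_nonneg (ae_of_all _ fun _ ↦ norm_nonneg _) (hν.const_mul _)
          (ae_of_all _ hbound)
    _ = L * |μ| * ∫ u, ‖u‖ ∂ν := integral_const_mul _ _

section stdGaussian

variable {E : Type*} [NormedAddCommGroup E] [InnerProductSpace ℝ E] [FiniteDimensional ℝ E]
  [MeasurableSpace E] [BorelSpace E]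
open ProbabilityTheory

theorem memLp_two_inner_stdGaussian (v : E) : MemLp (fun x ↦ ⟪v, x⟫) 2 (stdGaussian E) :=
  IsGaussian.memLp_dual _ (innerSL ℝ v) 2 (by simp)

theorem integral_sq_inner_stdGaussian (v : E) :
    ∫ x, ⟪v, x⟫ ^ 2 ∂stdGaussian E = ‖v‖ ^ 2 := by
  have hvar : Var[fun x ↦ ⟪v, x⟫; stdGaussian E] = ‖v‖ ^ 2 := by
    simpa using variance_dual_stdGaussian (innerSL ℝ v)
  have hmean : ∫ x, ⟪v, x⟫ ∂stdGaussian E = 0 := by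
    simpa using integral_strongDual_stdGaussian (innerSL ℝ v)
  rw [variance_eq_sub (memLp_two_inner_stdGaussian v), hmean] at hvar
  simpa using hvar

theorem integral_norm_sq_stdGaussian :
    ∫ x, ‖x‖ ^ 2 ∂stdGaussian E = Module.finrank ℝ E := by
  let b := stdOrthonormalBasis ℝ E
  simp_rw [← b.sum_sq_inner_right]
  rw [integral_finsetSum _ fun i _ ↦ (memLp_two_inner_stdGaussian (b i)).integrable_sq]
  simp [integral_sq_inner_stdGaussian, b.orthonormal.1]

theorem sq_norm_sub_integral_stdGaussian_le {F : Type*} [NormedAddCommGroup F]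
    [NormedSpace ℝ F] [CompleteSpace F] {g : E → F} {L : ℝ}
    (hg : ∀ x y, ‖g x - g y‖ ≤ L * ‖x - y‖) (x : E) (μ : ℝ) :
    ‖g x - ∫ u, g (x + μ • u) ∂stdGaussian E‖ ^ 2 ≤ L ^ 2 * μ ^ 2 * Module.finrank ℝ E := by
  have hmean := norm_sub_integral_comp_add_smul_le hg
    (IsGaussian.integrable_id (μ := stdGaussian E)).norm x μ
  have hjensen : (∫ u, ‖u‖ ∂stdGaussian E) ^ 2 ≤ Module.finrank ℝ E :=
    integral_norm_sq_stdGaussian (E := E) ▸ sq_integral_le_integral_sq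
      (IsGaussian.memLp_two_id (μ := stdGaussian E)).norm
  calc ‖g x - ∫ u, g (x + μ • u) ∂stdGaussian E‖ ^ 2
      ≤ (L * |μ| * ∫ u, ‖u‖ ∂stdGaussian E) ^ 2 := pow_le_pow_left₀ (norm_nonneg _) hmean 2
    _ = L ^ 2 * μ ^ 2 * (∫ u, ‖u‖ ∂stdGaussian E) ^ 2 := by rw [mul_pow, mul_pow, sq_abs]
    _ ≤ L ^ 2 * μ ^ 2 * Module.finrank ℝ E := by gcongr

end stdGaussian

theorem true_gradient_lower_bound_general
    (d : ℕ) (L μ : ℝ)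
    (f : EuclideanSpace ℝ (Fin d) → ℝ)
    (hlip : ∀ x y, ‖gradient f x - gradient f y‖ ≤ L * ‖x - y‖) :
    ∀ x : EuclideanSpace ℝ (Fin d),
      1 / 2 * ‖gradient f x‖ ^ 2 - μ ^ 2 * L ^ 2 / 4 * ((d : ℝ) + 3) ^ 3 ≤
        ‖∫ u, gradient f (x + μ • u) ∂(stdGaussian d)‖ ^ 2 := by
  intro x
  set a := gradient f x
  set b := ∫ u, gradient f (x + μ • u) ∂(stdGaussian d)
  have hgap : ‖a - b‖ ^ 2 ≤ L ^ 2 * μ ^ 2 * d := by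
    simpa [b, stdGaussian_eq_stdGaussian_euclideanSpace] using
      sq_norm_sub_integral_stdGaussian_le hlip x μ
  have hsplit : ‖a‖ ^ 2 ≤ 2 * (‖b‖ ^ 2 + ‖a - b‖ ^ 2) :=
    calc ‖a‖ ^ 2 ≤ (‖b‖ + ‖a - b‖) ^ 2 := by
          gcongr; simpa using norm_add_le b (a - b)
      _ ≤ 2 * (‖b‖ ^ 2 + ‖a - b‖ ^ 2) := add_sq_le
  have hdim : (d : ℝ) ≤ ((d : ℝ) + 3) ^ 3 / 4 := by nlinarith [sq_nonneg ((d : ℝ) + 3)]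
  nlinarith [mul_le_mul_of_nonneg_left hdim (sq_nonneg (μ * L))]

/-- **Lower bound of the true gradient norm by the smoothed gradient norm.**
If `f` has `L`-Lipschitz gradient, then
`(1/2)‖∇f(x)‖² − (μ²L²/4)(d+3)³ ≤ ‖∇f_μ(x)‖²`, where `∇f_μ(x)` is the
Gaussian-averaged gradient. -/
theorem true_gradient_lower_bound
    (d : ℕ) (L μ : ℝ) (hL : 0 ≤ L) (hμ : 0 ≤ μ)
    (f : EuclideanSpace ℝ (Fin d) → ℝ)
    (hdiff : Differentiable ℝ f)
    (hlip : ∀ x y, ‖gradient f x - gradient f y‖ ≤ L * ‖x - y‖) :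
    ∀ x : EuclideanSpace ℝ (Fin d),
      1 / 2 * ‖gradient f x‖ ^ 2 - μ ^ 2 * L ^ 2 / 4 * ((d : ℝ) + 3) ^ 3 ≤
        ‖∫ u, gradient f (x + μ • u) ∂(stdGaussian d)‖ ^ 2 :=
  true_gradient_lower_bound_general d L μ f hlip
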